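/- arXiv:2408.03546 — 6 statements merged into one kernel-verified Lean document; each statement's English description precedes it below -/
import Mathlib

section
/- Fix real p > 1 and b > 0, and let i ≥ 1 be an integer. Let M ∈ ℝ^{2×2} be any of the four matrices B_i, −B_i, C_i, −C_i, and write a := (M₁₁, M₁₂) ∈ ℝ² for its first row and c := (M₂₁, M₂₂) ∈ ℝ² for its second row. Then |a|^{p−2} a − (−c₂, c₁) = 0. In particular, if u, v : ℝ² → ℝ are differentiable at a point x with (∇u(x); ∇v(x)) equal (as a 2×2 matrix of partial derivatives) to ±B_i or ±C_i, then |∇u(x)|^{p−2}∇u(x) − ∇⊥v(x) = 0 even though ∇u(x) may be nonzero. -/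
open Real

/-- `A_i = diag(b·i, i^{p−1})`. -/
noncomputable def Amat (p b : ℝ) (i : ℕ) : Matrix (Fin 2) (Fin 2) ℝ :=
  !![b * i, 0; 0, (i : ℝ) ^ (p - 1)]

/-- `B_i = diag(b(i−1), −b^{p−1}(i−1)^{p−1})`. -/
noncomputable def Bmat (p b : ℝ) (i : ℕ) : Matrix (Fin 2) (Fin 2) ℝ :=
  !![b * ((i : ℝ) - 1), 0; 0, -(b ^ (p - 1) * ((i : ℝ) - 1) ^ (p - 1))]

/-- `C_i = diag(−i, i^{p−1})`. -/
noncomputable def Cmat (p b : ℝ) (i : ℕ) : Matrix (Fin 2) (Fin 2) ℝ :=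
  !![-(i : ℝ), 0; 0, (i : ℝ) ^ (p - 1)]

/-- The vector `(x, y)` as an element of Euclidean `ℝ²`. -/
noncomputable def vec2 (x y : ℝ) : EuclideanSpace ℝ (Fin 2) :=
  (WithLp.equiv 2 (Fin 2 → ℝ)).symm ![x, y]

lemma norm_vec2_x (x : ℝ) : ‖vec2 x 0‖ = |x| := by
  simp [EuclideanSpace.norm_eq, vec2, Fin.sum_univ_two, Real.norm_eq_abs, sq_abs,
    Real.sqrt_sq_eq_abs]

lemma vec2_key (p x s : ℝ) (h : |x| ^ (p - 2) * x = s) :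
    (‖vec2 x 0‖ ^ (p - 2)) • vec2 x 0 - vec2 s 0 = 0 := by
  rw [norm_vec2_x]
  apply PiLp.ext
  intro j
  fin_cases j <;>
    simp [vec2, PiLp.sub_apply, PiLp.smul_apply, smul_eq_mul, h]

lemma rpow_key (p t : ℝ) (hp : 1 < p) (ht : 0 ≤ t) :
    |t| ^ (p - 2) * t = t ^ (p - 1) := by
  rw [abs_of_nonneg ht]
  rcases eq_or_lt_of_le ht with h0 | h0
  · rw [← h0, mul_zero, Real.zero_rpow (by linarith)]
  · have : t ^ (p - 2) * t = t ^ (p - 2) * t ^ (1 : ℝ) := by rw [Real.rpow_one]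
    rw [this, ← Real.rpow_add h0]
    congr 1
    ring

/-- **Lemma.** If `M` is one of `±B_i, ±C_i` (`i ≥ 1`) and `a = (M₁₁, M₁₂)`,
`c = (M₂₁, M₂₂)` are its rows, then `|a|^{p−2} a − (−c₂, c₁) = 0`; i.e. on such
gradient configurations `|∇u|^{p−2}∇u − ∇⊥v` vanishes even though `∇u` may be nonzero. -/
theorem pLaplace_kernel_on_BC (p b : ℝ) (hp : 1 < p) (hb : 0 < b)
    (i : ℕ) (hi : 1 ≤ i) (M : Matrix (Fin 2) (Fin 2) ℝ)
    (hM : M = Bmat p b i ∨ M = -Bmat p b i ∨ M = Cmat p b i ∨ M = -Cmat p b i) :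
    (‖vec2 (M 0 0) (M 0 1)‖ ^ (p - 2)) • vec2 (M 0 0) (M 0 1)
      - vec2 (-(M 1 1)) (M 1 0) = 0 := by
  have hi1 : (0 : ℝ) ≤ (i : ℝ) - 1 := by
    have : (1 : ℝ) ≤ (i : ℝ) := by exact_mod_cast hi
    linarith
  have hi0 : (0 : ℝ) ≤ (i : ℝ) := Nat.cast_nonneg i
  have hBa : (0 : ℝ) ≤ b * ((i : ℝ) - 1) := mul_nonneg hb.le hi1
  have hmulB : (b * ((i : ℝ) - 1)) ^ (p - 1) = b ^ (p - 1) * ((i : ℝ) - 1) ^ (p - 1) :=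
    Real.mul_rpow hb.le hi1
  rcases hM with h | h | h | h <;> subst h <;>
    simp only [Bmat, Cmat, Matrix.neg_apply, Matrix.of_apply, Matrix.cons_val', Matrix.cons_val_zero,
      Matrix.cons_val_one, Matrix.head_cons, Matrix.empty_val', Matrix.cons_val_fin_one,
      Matrix.head_fin_const, neg_neg, neg_zero]
  · exact vec2_key p _ _ (by rw [rpow_key p _ hp hBa, hmulB])
  · exact vec2_key p _ _ (by rw [abs_neg, mul_neg, rpow_key p _ hp hBa, hmulB])
  · exact vec2_key p _ _ (by rw [abs_neg, mul_neg, rpow_key p _ hp hi0])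
  · exact vec2_key p _ _ (by rw [rpow_key p _ hp hi0])
end

section
/- Fix real p > 1 and b > 0, and let i ≥ 1 be an integer. Set α := ((i+1)^{p−1} − i^{p−1})/((i+1)^{p−1} + b^{p−1} i^{p−1}) and D_i := diag(b·i, (i+1)^{p−1}). Then α ∈ (0,1), A_i = α·B_{i+1} + (1−α)·D_i, and the matrix B_{i+1} − D_i has rank 1. Moreover α = 1 − (1 + b^{p−1})/((1 + 1/i)^{p−1} + b^{p−1}). -/
open Real

/-!
Write `x = i^{p-1}`, `y = (i+1)^{p-1}`, `c = b^{p-1}`. The first diagonal entries of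
`A_i`, `B_{i+1}` and `D_i` all equal `b i`, so only the second entries matter; there the
splitting reads `x = α (-c x) + (1 - α) y`, which holds for `α = (y - x)/(y + c x)`.
Monotonicity of `t ↦ t^{p-1}` gives `0 < x < y`, whence `α ∈ (0,1)`, and `B_{i+1} - D_i`
is `diag(0, -(c x + y))`, of rank one.
-/

section SplittingWeight

variable {x y c : ℝ}

lemma splitting_weight_pos (hxy : x < y) (hden : 0 < y + c * x) : 0 < (y - x) / (y + c * x) :=
  div_pos (sub_pos.mpr hxy) hden

lemma splitting_weight_lt_one (hx : 0 < x) (hc : 0 < c) (hden : 0 < y + c * x) :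
    (y - x) / (y + c * x) < 1 := by
  rw [div_lt_one hden]
  nlinarith

lemma one_sub_splitting_weight (hden : y + c * x ≠ 0) :
    1 - (y - x) / (y + c * x) = (1 + c) * x / (y + c * x) := by
  rw [one_sub_div hden]
  ring

lemma splitting_weight_combination (hden : y + c * x ≠ 0) :
    (y - x) / (y + c * x) * -(c * x) + (1 - (y - x) / (y + c * x)) * y = x := by
  rw [one_sub_splitting_weight hden, div_mul_eq_mul_div, div_mul_eq_mul_div, ← add_div,
    div_eq_iff hden]
  ring

end SplittingWeight

lemma diag_smul_add_smul {R : Type*} [Semiring R] (α β a d a' d' : R) :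
    α • !![a, 0; 0, d] + β • !![a', 0; 0, d'] = !![α * a + β * a', 0; 0, α * d + β * d'] := by
  simp only [Matrix.smul_of, Matrix.of_add_of, Matrix.smul_cons, Matrix.cons_add_cons,
    smul_eq_mul, Matrix.smul_empty, Matrix.empty_add_empty, mul_zero, add_zero]

lemma diag_sub_diag {R : Type*} [AddGroup R] (a d a' d' : R) :
    !![a, 0; 0, d] - !![a', 0; 0, d'] = !![a - a', 0; 0, d - d'] := by
  simp only [Matrix.of_sub_of, Matrix.cons_sub_cons, Matrix.empty_sub_empty, sub_zero]

lemma rank_diag_zero_left {K : Type*} [Field K] {d : K} (hd : d ≠ 0) :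
    (!![0, 0; 0, d] : Matrix (Fin 2) (Fin 2) K).rank = 1 := by
  classical
  rw [show !![0, 0; 0, d] = Matrix.diagonal ![0, d] by rw [Matrix.diagonal_fin_two]; rfl,
    Matrix.rank_diagonal, Fintype.card_eq_one_iff]
  exact ⟨⟨1, hd⟩, fun ⟨j, hj⟩ => by fin_cases j; exacts [absurd rfl hj, rfl]⟩

lemma Bmat_succ (p b : ℝ) (i : ℕ) :
    Bmat p b (i + 1) = !![b * i, 0; 0, -(b ^ (p - 1) * (i : ℝ) ^ (p - 1))] := by
  simp [Bmat]

lemma one_add_one_div_rpow {t : ℝ} (ht : 0 < t) (q : ℝ) :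
    (1 + 1 / t) ^ q = (t + 1) ^ q / t ^ q := by
  rw [← div_rpow (by linarith) ht.le, add_div, div_self ht.ne', add_comm]

/-- **Lemma (first elementary splitting).** For `i ≥ 1`, with
`α = ((i+1)^{p−1} − i^{p−1})/((i+1)^{p−1} + b^{p−1} i^{p−1})` and
`D_i = diag(b·i, (i+1)^{p−1})` one has `α ∈ (0,1)`, `A_i = α B_{i+1} + (1−α) D_i`,
`rank(B_{i+1} − D_i) = 1`, and `α = 1 − (1+b^{p−1})/((1+1/i)^{p−1}+b^{p−1})`. -/
theorem first_elementary_splitting (p b : ℝ) (hp : 1 < p) (hb : 0 < b)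
    (i : ℕ) (hi : 1 ≤ i) (α : ℝ)
    (hα : α = (((i : ℝ) + 1) ^ (p - 1) - (i : ℝ) ^ (p - 1)) /
      (((i : ℝ) + 1) ^ (p - 1) + b ^ (p - 1) * (i : ℝ) ^ (p - 1)))
    (D : Matrix (Fin 2) (Fin 2) ℝ)
    (hD : D = !![b * i, 0; 0, ((i : ℝ) + 1) ^ (p - 1)]) :
    0 < α ∧ α < 1 ∧
    Amat p b i = α • Bmat p b (i + 1) + (1 - α) • D ∧
    (Bmat p b (i + 1) - D).rank = 1 ∧
    α = 1 - (1 + b ^ (p - 1)) / ((1 + 1 / (i : ℝ)) ^ (p - 1) + b ^ (p - 1)) := by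
  subst hα hD
  have hi0 : (0 : ℝ) < i := by exact_mod_cast hi
  have hx : 0 < (i : ℝ) ^ (p - 1) := rpow_pos_of_pos hi0 _
  have hy : 0 < ((i : ℝ) + 1) ^ (p - 1) := rpow_pos_of_pos (by linarith) _
  have hc : 0 < b ^ (p - 1) := rpow_pos_of_pos hb _
  have hxy : (i : ℝ) ^ (p - 1) < ((i : ℝ) + 1) ^ (p - 1) :=
    rpow_lt_rpow hi0.le (lt_add_one _) (by linarith)
  have hden : 0 < ((i : ℝ) + 1) ^ (p - 1) + b ^ (p - 1) * (i : ℝ) ^ (p - 1) := by positivity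
  refine ⟨splitting_weight_pos hxy hden, splitting_weight_lt_one hx hc hden, ?_, ?_, ?_⟩
  · rw [Amat, Bmat_succ, diag_smul_add_smul, splitting_weight_combination hden.ne']
    congr
    ring
  · rw [Bmat_succ, diag_sub_diag, sub_self]
    exact rank_diag_zero_left (by linarith)
  · rw [one_add_one_div_rpow hi0, eq_sub_iff_add_eq, ← eq_sub_iff_add_eq',
      one_sub_splitting_weight hden.ne']
    field_simp
end

section
/- Let p ∈ (1,∞) and let q̄ ∈ (0, q̄₁), where q̄₁ := sup_{b ∈ (0,∞)} [(p−1)/(b^{p−1}+1) + b/(b+1)]. Then there exists b ∈ (0,∞) with b ≠ 1 and a constant C > 0 (depending on p, b, q̄) such that for every integer N ≥ 2 the product Γ_N := ∏_{j=2}^{N} γ_j satisfies Γ_N ≤ C · N^{−q̄}. -/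
open Real

/-- `α_{i+1} = ((i+1)^{p−1} − i^{p−1})/((i+1)^{p−1} + b^{p−1} i^{p−1})`. -/
noncomputable def alphaCoef (p b : ℝ) (i : ℕ) : ℝ :=
  (((i : ℝ) + 1) ^ (p - 1) - (i : ℝ) ^ (p - 1)) /
    (((i : ℝ) + 1) ^ (p - 1) + b ^ (p - 1) * (i : ℝ) ^ (p - 1))

/-- `β_{i+1} = (1 − α_{i+1}) · b/((b+1)(i+1))`. -/
noncomputable def betaCoef (p b : ℝ) (i : ℕ) : ℝ :=
  (1 - alphaCoef p b i) * (b / ((b + 1) * ((i : ℝ) + 1)))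

/-- `γ_{i+1} = 1 − α_{i+1} − β_{i+1}`. -/
noncomputable def gammaCoef (p b : ℝ) (i : ℕ) : ℝ :=
  1 - alphaCoef p b i - betaCoef p b i

/-!
For large `i` we have `i * (α_{i+1} + β_{i+1}) → (p - 1) / (b ^ (p - 1) + 1) + b / (b + 1)`, so
once `b ≠ 1` is chosen (by continuity in `b`) with this limit above `q̄`, eventually
`γ_{i+1} ≤ 1 - q̄ / i ≤ (i / (i + 1)) ^ q̄`. From some index `M` on, the product of these bounds
telescopes to `(M / N) ^ q̄`, and the finitely many earlier factors lie in `[0, 1]`.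
-/

open Filter Topology

theorem tendsto_mul_one_add_inv_rpow_sub_one (r : ℝ) :
    Tendsto (fun x : ℝ => x * ((1 + x⁻¹) ^ r - 1)) atTop (𝓝 r) := by
  have hderiv : HasDerivAt (fun t : ℝ => t ^ r) r 1 := by
    simpa using hasDerivAt_rpow_const (x := 1) (p := r) (Or.inl one_ne_zero)
  have hlim : Tendsto (fun x : ℝ => 1 + x⁻¹) atTop (𝓝[≠] 1) := by
    refine tendsto_nhdsWithin_iff.2 ⟨?_, ?_⟩
    · simpa using tendsto_inv_atTop_zero.const_add (1 : ℝ)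
    · filter_upwards [eventually_gt_atTop 0] with x hx
      simpa using hx.ne'
  refine ((hasDerivAt_iff_tendsto_slope.1 hderiv).comp hlim).congr' ?_
  filter_upwards [eventually_gt_atTop 0] with x hx
  simp [slope_def_field, mul_comm]

theorem one_sub_div_le_rpow_div_add_one {x : ℝ} (hx : 0 < x) {q : ℝ} (hq : 0 ≤ q) :
    1 - q / x ≤ (x / (x + 1)) ^ q := by
  have hlog : -(1 / x) ≤ log (x / (x + 1)) := by
    rw [← neg_neg (log _), ← log_inv, inv_div, neg_le_neg_iff]
    calc log ((x + 1) / x) ≤ (x + 1) / x - 1 := log_le_sub_one_of_pos (by positivity)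
      _ = 1 / x := by field_simp; ring
  calc 1 - q / x ≤ exp (-(q / x)) := by linarith [add_one_le_exp (-(q / x))]
    _ = exp (-(1 / x) * q) := by ring_nf
    _ ≤ exp (log (x / (x + 1)) * q) := by gcongr
    _ = (x / (x + 1)) ^ q := (rpow_def_of_pos (by positivity) q).symm

theorem prod_Ico_div_add_one {M N : ℕ} (hM : 0 < M) (hMN : M ≤ N) :
    ∏ i ∈ Finset.Ico M N, ((i : ℝ) / (i + 1)) = M / N := by
  induction N, hMN using Nat.le_induction with
  | base => simp [div_self (by positivity : (M : ℝ) ≠ 0)]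
  | succ N hMN ih =>
    rw [Finset.prod_Ico_succ_top hMN, ih]
    have : (N : ℝ) ≠ 0 := by have := hM.trans_le hMN; positivity
    push_cast
    field_simp

theorem prod_Icc_add_one_sub_one {M : Type*} [CommMonoid M] (f : ℕ → M) (n N : ℕ) :
    ∏ j ∈ Finset.Icc (n + 1) N, f (j - 1) = ∏ i ∈ Finset.Ico n N, f i := by
  rw [← Finset.Ico_add_one_right_eq_Icc, ← Finset.prod_Ico_add' _ n N 1]
  simp

theorem exists_prod_Ico_le_mul_rpow_neg {g : ℕ → ℝ} {q : ℝ} (hq : 0 ≤ q)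
    (hg : ∀ i, g i ∈ Set.Icc 0 1) (hdecay : ∀ᶠ i in atTop, g i ≤ ((i : ℝ) / (i + 1)) ^ q) :
    ∃ C > 0, ∀ N : ℕ, 1 ≤ N → ∏ i ∈ Finset.Ico 1 N, g i ≤ C * (N : ℝ) ^ (-q) := by
  obtain ⟨M, hM⟩ := (hdecay.and (eventually_ge_atTop 1)).exists_forall_of_atTop
  have hM₁ : 1 ≤ M := (hM M le_rfl).2
  have hM₀ : (0 : ℝ) < M := by simp; omega
  refine ⟨(M : ℝ) ^ q, by positivity, fun N hN => ?_⟩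
  have hN₀ : (0 : ℝ) < N := by simp; omega
  rw [rpow_neg hN₀.le, ← div_eq_mul_inv, ← div_rpow hM₀.le hN₀.le]
  have hprod_le_one : ∀ s : Finset ℕ, ∏ i ∈ s, g i ≤ 1 := fun s =>
    Finset.prod_le_one (fun i _ => (hg i).1) (fun i _ => (hg i).2)
  rcases le_or_gt N M with hNM | hMN
  · exact (hprod_le_one _).trans <|
      one_le_rpow ((one_le_div hN₀).2 (by exact_mod_cast hNM)) hq
  have htail : ∏ i ∈ Finset.Ico M N, g i ≤ ∏ i ∈ Finset.Ico M N, ((i : ℝ) / (i + 1)) ^ q :=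
    Finset.prod_le_prod (fun i _ => (hg i).1) fun i hi => (hM i (Finset.mem_Ico.1 hi).1).1
  rw [← Finset.prod_Ico_consecutive g hM₁ hMN.le, ← prod_Ico_div_add_one (by omega) hMN.le,
    ← finsetProd_rpow _ _ (fun i _ => by positivity)]
  exact (mul_le_of_le_one_left (Finset.prod_nonneg fun i _ => (hg i).1) (hprod_le_one _)).trans
    htail

/-- The limit of `i * (α_{i+1} + β_{i+1})`; `q̄₁` is its supremum over `b > 0`. -/
noncomputable def decayExponent (p b : ℝ) : ℝ := (p - 1) / (b ^ (p - 1) + 1) + b / (b + 1)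

theorem continuousAt_decayExponent (p : ℝ) {b : ℝ} (hb : 0 < b) :
    ContinuousAt (decayExponent p) b := by
  unfold decayExponent
  have : b ^ (p - 1) + 1 ≠ 0 := by positivity
  have : b + 1 ≠ 0 := by positivity
  fun_prop (disch := first | assumption | exact Or.inl hb.ne')

theorem exists_ne_one_lt_decayExponent {p q : ℝ}
    (hq : q < sSup {q : ℝ | ∃ b : ℝ, 0 < b ∧ q = decayExponent p b}) :
    ∃ b : ℝ, 0 < b ∧ b ≠ 1 ∧ q < decayExponent p b := by
  obtain ⟨_, ⟨b₀, hb₀, rfl⟩, hlt⟩ := exists_lt_of_lt_csSup (by exact ⟨_, 1, one_pos, rfl⟩) hq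
  rcases ne_or_eq b₀ 1 with hb₀₁ | rfl
  · exact ⟨b₀, hb₀, hb₀₁, hlt⟩
  have hnear : ∀ᶠ b in 𝓝[≠] 1, 0 < b ∧ q < decayExponent p b :=
    nhdsWithin_le_nhds <| (eventually_gt_nhds hb₀).and <|
      (continuousAt_decayExponent p hb₀).eventually (eventually_gt_nhds hlt)
  obtain ⟨b, hb, hb₁⟩ := (hnear.and self_mem_nhdsWithin).exists
  exact ⟨b, hb.1, hb₁, hb.2⟩

section Coefficients

variable {p b : ℝ}

theorem alphaCoef_nonneg (hp : 1 ≤ p) (hb : 0 ≤ b) (i : ℕ) : 0 ≤ alphaCoef p b i := by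
  have : (i : ℝ) ^ (p - 1) ≤ ((i : ℝ) + 1) ^ (p - 1) := by gcongr; linarith
  unfold alphaCoef
  exact div_nonneg (by linarith) (by positivity)

theorem alphaCoef_le_one (hb : 0 ≤ b) (i : ℕ) : alphaCoef p b i ≤ 1 := by
  apply div_le_one_of_le₀ _ (by positivity)
  have : 0 ≤ b ^ (p - 1) * (i : ℝ) ^ (p - 1) := by positivity
  linarith [rpow_nonneg (Nat.cast_nonneg (α := ℝ) i) (p - 1)]

theorem gammaCoef_eq_mul (p b : ℝ) (i : ℕ) :
    gammaCoef p b i = (1 - alphaCoef p b i) * (1 - b / ((b + 1) * ((i : ℝ) + 1))) := by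
  unfold gammaCoef betaCoef
  ring

theorem gammaCoef_mem_Icc (hp : 1 ≤ p) (hb : 0 ≤ b) (i : ℕ) :
    gammaCoef p b i ∈ Set.Icc 0 1 := by
  have hc₀ : 0 ≤ b / ((b + 1) * ((i : ℝ) + 1)) := by positivity
  have hc₁ : b / ((b + 1) * ((i : ℝ) + 1)) ≤ 1 :=
    div_le_one_of_le₀ (by nlinarith [(Nat.cast_nonneg i : (0 : ℝ) ≤ i)]) (by positivity)
  have hα₀ := alphaCoef_nonneg hp hb i
  have hα₁ := alphaCoef_le_one (p := p) hb i
  rw [gammaCoef_eq_mul]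
  exact ⟨by apply mul_nonneg <;> linarith, by apply mul_le_one₀ <;> linarith⟩

theorem alphaCoef_eq_of_ne_zero (p b : ℝ) {i : ℕ} (hi : i ≠ 0) :
    alphaCoef p b i =
      ((1 + (i : ℝ)⁻¹) ^ (p - 1) - 1) / ((1 + (i : ℝ)⁻¹) ^ (p - 1) + b ^ (p - 1)) := by
  have hi₀ : (0 : ℝ) < i := by positivity
  have hpow : (1 + (i : ℝ)⁻¹) ^ (p - 1) = ((i : ℝ) + 1) ^ (p - 1) / (i : ℝ) ^ (p - 1) := by
    rw [← div_rpow (by positivity) hi₀.le]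
    congr 1
    field_simp
  have hi_pow : (i : ℝ) ^ (p - 1) ≠ 0 := (rpow_pos_of_pos hi₀ _).ne'
  rw [hpow, alphaCoef, ← div_div_div_cancel_right₀ hi_pow]
  congr 1 <;> field_simp

theorem tendsto_mul_alphaCoef (hb : 0 ≤ b) :
    Tendsto (fun i : ℕ => i * alphaCoef p b i) atTop (𝓝 ((p - 1) / (1 + b ^ (p - 1)))) := by
  have hinv : Tendsto (fun i : ℕ => 1 + (i : ℝ)⁻¹) atTop (𝓝 1) := by
    simpa using tendsto_inv_atTop_nhds_zero_nat.const_add (1 : ℝ)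
  have hpow : Tendsto (fun i : ℕ => (1 + (i : ℝ)⁻¹) ^ (p - 1)) atTop (𝓝 1) := by
    simpa using hinv.rpow_const (Or.inl one_ne_zero)
  have hnum := (tendsto_mul_one_add_inv_rpow_sub_one (p - 1)).comp tendsto_natCast_atTop_atTop
  have hlim := hnum.div (hpow.add_const (b ^ (p - 1))) (by positivity)
  refine hlim.congr' ?_
  filter_upwards [eventually_ne_atTop 0] with i hi
  simp only [Pi.div_apply, Function.comp_apply, alphaCoef_eq_of_ne_zero p b hi, mul_div_assoc]

theorem tendsto_alphaCoef (hb : 0 ≤ b) : Tendsto (alphaCoef p b) atTop (𝓝 0) := by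
  have h := (tendsto_mul_alphaCoef (p := p) hb).mul tendsto_inv_atTop_nhds_zero_nat
  rw [mul_zero] at h
  refine h.congr' ?_
  filter_upwards [eventually_ne_atTop 0] with i hi
  field_simp

theorem tendsto_mul_betaCoef (hb : 0 ≤ b) :
    Tendsto (fun i : ℕ => i * betaCoef p b i) atTop (𝓝 (b / (b + 1))) := by
  have h := (((tendsto_alphaCoef (p := p) hb).const_sub 1).mul
    (tendsto_natCast_div_add_atTop (1 : ℝ))).mul_const (b / (b + 1))
  rw [sub_zero, one_mul, one_mul] at h
  refine h.congr fun i => ?_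
  unfold betaCoef
  field_simp

theorem tendsto_mul_alphaCoef_add_betaCoef (hb : 0 ≤ b) :
    Tendsto (fun i : ℕ => i * (alphaCoef p b i + betaCoef p b i)) atTop
      (𝓝 (decayExponent p b)) := by
  simpa only [mul_add, decayExponent, add_comm (1 : ℝ)] using
    (tendsto_mul_alphaCoef hb).add (tendsto_mul_betaCoef hb)

theorem gammaCoef_le_rpow {p b q : ℝ} (hq : 0 ≤ q) {i : ℕ} (hi : i ≠ 0)
    (h : q ≤ i * (alphaCoef p b i + betaCoef p b i)) :
    gammaCoef p b i ≤ ((i : ℝ) / (i + 1)) ^ q := by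
  have hi₀ : (0 : ℝ) < i := by positivity
  have : q / i ≤ alphaCoef p b i + betaCoef p b i := by
    rwa [div_le_iff₀ hi₀, mul_comm]
  calc gammaCoef p b i ≤ 1 - q / i := by unfold gammaCoef; linarith
    _ ≤ ((i : ℝ) / (i + 1)) ^ q := one_sub_div_le_rpow_div_add_one hi₀ hq

end Coefficients

/-- **Lemma.** For `p > 1` and `0 < q̄ < q̄₁ := sup_{b>0} [(p−1)/(b^{p−1}+1) + b/(b+1)]`
there exist `b > 0`, `b ≠ 1`, and `C > 0` such that `Γ_N := ∏_{j=2}^N γ_j ≤ C·N^{−q̄}`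
for all `N ≥ 2` (here `γ_j = γ_{(j−1)+1}` is the coefficient `gammaCoef p b (j−1)`). -/
theorem gamma_product_decay (p qbar : ℝ) (hp : 1 < p) (hq : 0 < qbar)
    (hq' : qbar < sSup {q : ℝ | ∃ b : ℝ, 0 < b ∧
      q = (p - 1) / (b ^ (p - 1) + 1) + b / (b + 1)}) :
    ∃ b : ℝ, 0 < b ∧ b ≠ 1 ∧ ∃ C : ℝ, 0 < C ∧
      ∀ N : ℕ, 2 ≤ N →
        (∏ j ∈ Finset.Icc 2 N, gammaCoef p b (j - 1)) ≤ C * (N : ℝ) ^ (-qbar) := by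
  obtain ⟨b, hb, hb₁, hlt⟩ := exists_ne_one_lt_decayExponent hq'
  have hdecay : ∀ᶠ i : ℕ in atTop, gammaCoef p b i ≤ ((i : ℝ) / (i + 1)) ^ qbar := by
    filter_upwards [eventually_ne_atTop 0,
      (tendsto_mul_alphaCoef_add_betaCoef hb.le).eventually (eventually_ge_nhds hlt)] with i hi hi'
    exact gammaCoef_le_rpow hq.le hi hi'
  obtain ⟨C, hC, hbound⟩ :=
    exists_prod_Ico_le_mul_rpow_neg hq.le (gammaCoef_mem_Icc hp.le hb.le) hdecay
  refine ⟨b, hb, hb₁, C, hC, fun N hN => ?_⟩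
  rw [prod_Icc_add_one_sub_one]
  exact hbound N (by omega)
end

section
/- Fix real p > 1 and b > 0, and set q̃_b := (p−1)/(b^{p−1}+1) + b/(b+1). Then there exist a constant C > 0 and an integer k₀ ≥ 1 (both depending on p and b) such that for all integers k ≥ k₀, | −log γ_{k+1} − q̃_b/k | ≤ C/k². Equivalently, −log γ_{k+1} = q̃_b/k + O(1/k²) as k → ∞. -/
open Real

/-! Put `x = 1/k`. Then `γ_{k+1} = (1 - α(x)) (1 - b/(b+1) · x/(1+x))` with
`α(x) = ((1+x)^{p-1} - 1)/((1+x)^{p-1} + b^{p-1})`, a function of `x` that is real-analytic at `0`,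
equal to `1` there, with derivative `-q̃_b`. Hence `-log γ_{k+1}` is an analytic function of `1/k`
vanishing at `0` with derivative `q̃_b`, and Taylor's theorem for analytic functions bounds the
remainder `-log γ_{k+1} - q̃_b/k` by `O(1/k²)`. -/

open Filter Asymptotics Topology

theorem AnalyticAt.isBigO_sub_sub_smul_deriv {𝕜 E : Type*} [NontriviallyNormedField 𝕜]
    [CharZero 𝕜] [NormedAddCommGroup E] [NormedSpace 𝕜 E] [CompleteSpace E] {f : 𝕜 → E}
    (hf : AnalyticAt 𝕜 f 0) :
    (fun x ↦ f x - f 0 - x • deriv f 0) =O[𝓝 0] fun x ↦ x ^ 2 := by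
  obtain ⟨F, hF, hfF⟩ := hf.exists_eventuallyEq_sum_add_pow_mul 2
  have hFO : F =O[𝓝 0] fun _ ↦ (1 : 𝕜) := hF.continuousAt.isBigO_one 𝕜
  refine ((isBigO_refl (fun x : 𝕜 ↦ x ^ 2) _).smul hFO).congr' ?_ (by simp)
  filter_upwards [hfF] with x hx
  simp [hx, Finset.sum_range_succ, add_assoc]

noncomputable def alphaFun (p b x : ℝ) : ℝ :=
  ((1 + x) ^ (p - 1) - 1) / ((1 + x) ^ (p - 1) + b ^ (p - 1))

noncomputable def gammaFun (p b x : ℝ) : ℝ :=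
  (1 - alphaFun p b x) * (1 - b / (b + 1) * (x / (1 + x)))

noncomputable def qTilde (p b : ℝ) : ℝ := (p - 1) / (b ^ (p - 1) + 1) + b / (b + 1)

theorem gammaCoef_eq_gammaFun_inv (p b : ℝ) {k : ℕ} (hk : 0 < k) :
    gammaCoef p b k = gammaFun p b (k : ℝ)⁻¹ := by
  have hk : (0 : ℝ) < k := by exact_mod_cast hk
  have hks : (k : ℝ) ^ (p - 1) ≠ 0 := (rpow_pos_of_pos hk _).ne'
  have hsucc :
      ((k : ℝ) + 1) ^ (p - 1) = (k : ℝ) ^ (p - 1) * (1 + (k : ℝ)⁻¹) ^ (p - 1) := by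
    rw [← mul_rpow hk.le (by positivity), mul_add, mul_inv_cancel₀ hk.ne', mul_one]
  have hα : alphaCoef p b k = alphaFun p b (k : ℝ)⁻¹ := by
    rw [alphaCoef, alphaFun, hsucc, ← mul_div_mul_left (_ - 1) _ hks]
    congr 1 <;> ring
  have hinv : 1 / ((k : ℝ) + 1) = (k : ℝ)⁻¹ / (1 + (k : ℝ)⁻¹) := by
    field_simp
  rw [gammaCoef, betaCoef, gammaFun, hα, ← hinv, div_mul_div_comm, mul_one]
  ring

theorem gammaFun_zero (p b : ℝ) : gammaFun p b 0 = 1 := by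
  simp [gammaFun, alphaFun]

theorem analyticAt_gammaFun {p b : ℝ} (hb : 0 < b) : AnalyticAt ℝ (gammaFun p b) 0 := by
  have hpow : AnalyticAt ℝ (fun x : ℝ ↦ (1 + x) ^ (p - 1)) 0 :=
    Real.one_add_rpow_hasFPowerSeriesAt_zero.analyticAt
  have hc : 0 < b ^ (p - 1) := rpow_pos_of_pos hb _
  have hα : AnalyticAt ℝ (alphaFun p b) 0 :=
    (hpow.sub analyticAt_const).div (hpow.add analyticAt_const)
      (by simp only [add_zero, one_rpow]; positivity)
  have hfrac : AnalyticAt ℝ (fun x : ℝ ↦ 1 - b / (b + 1) * (x / (1 + x))) 0 :=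
    analyticAt_const.sub <| analyticAt_const.mul <|
      analyticAt_id.div (analyticAt_const.add analyticAt_id) (by simp)
  exact (analyticAt_const.sub hα).mul hfrac

theorem hasDerivAt_gammaFun_zero {p b : ℝ} (hb : 0 < b) :
    HasDerivAt (gammaFun p b) (-qTilde p b) 0 := by
  have hpow : HasDerivAt (fun x : ℝ ↦ (1 + x) ^ (p - 1)) (p - 1) 0 := by
    simpa using ((hasDerivAt_id (0 : ℝ)).const_add 1).rpow_const (p := p - 1) (by simp)
  have hc : 0 < b ^ (p - 1) := rpow_pos_of_pos hb _
  have hα : HasDerivAt (alphaFun p b) ((p - 1) / (b ^ (p - 1) + 1)) 0 :=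
    ((hpow.sub_const 1).fun_div (hpow.add_const _)
      (by simp only [add_zero, one_rpow]; positivity)).congr_deriv
      (by simp only [add_zero, one_rpow]; field_simp; ring)
  have hfrac : HasDerivAt (fun x : ℝ ↦ 1 - b / (b + 1) * (x / (1 + x))) (-(b / (b + 1))) 0 :=
    ((((hasDerivAt_id' 0).fun_div ((hasDerivAt_id' 0).const_add 1) (by simp)).const_mul
      _).const_sub 1).congr_deriv (by simp)
  exact ((hα.const_sub 1).fun_mul hfrac).congr_deriv (by simp [alphaFun, qTilde]; ring)

theorem hasDerivAt_neg_log_gammaFun_zero {p b : ℝ} (hb : 0 < b) :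
    HasDerivAt (fun x ↦ -log (gammaFun p b x)) (qTilde p b) 0 := by
  simpa [gammaFun_zero] using ((hasDerivAt_gammaFun_zero hb).log (by simp [gammaFun_zero])).fun_neg

theorem isBigO_neg_log_gammaFun_sub {p b : ℝ} (hb : 0 < b) :
    (fun x ↦ -log (gammaFun p b x) - x * qTilde p b) =O[𝓝 0] fun x ↦ x ^ 2 := by
  have han : AnalyticAt ℝ (fun x ↦ -log (gammaFun p b x)) 0 :=
    ((analyticAt_gammaFun hb).log (by simp [gammaFun_zero])).neg
  simpa [gammaFun_zero, (hasDerivAt_neg_log_gammaFun_zero hb).deriv] using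
    han.isBigO_sub_sub_smul_deriv

theorem neg_log_gamma_expansion_general (p b : ℝ) (hb : 0 < b)
    (qt : ℝ) (hqt : qt = (p - 1) / (b ^ (p - 1) + 1) + b / (b + 1)) :
    ∃ (C : ℝ) (k₀ : ℕ), 0 < C ∧ 1 ≤ k₀ ∧
      ∀ k : ℕ, k₀ ≤ k →
        |(-Real.log (gammaCoef p b k)) - qt / (k : ℝ)| ≤ C / (k : ℝ) ^ 2 := by
  obtain ⟨C, hC, hCO⟩ := ((isBigO_neg_log_gammaFun_sub hb).comp_tendsto
    tendsto_inv_atTop_nhds_zero_nat).exists_pos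
  obtain ⟨N, hN⟩ := eventually_atTop.1 hCO.bound
  refine ⟨C, max N 1, hC, le_max_right _ _, fun k hk ↦ ?_⟩
  rw [gammaCoef_eq_gammaFun_inv p b (le_of_max_le_right hk), hqt, ← qTilde]
  simpa [div_eq_mul_inv, mul_comm] using hN k (le_of_max_le_left hk)

/-- **Lemma (Taylor expansion of `−log γ_{k+1}`).** With
`q̃_b = (p−1)/(b^{p−1}+1) + b/(b+1)` there are `C > 0` and an integer `k₀ ≥ 1` such that
`| −log γ_{k+1} − q̃_b/k | ≤ C/k²` for all `k ≥ k₀`. -/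
theorem neg_log_gamma_expansion (p b : ℝ) (hp : 1 < p) (hb : 0 < b)
    (qt : ℝ) (hqt : qt = (p - 1) / (b ^ (p - 1) + 1) + b / (b + 1)) :
    ∃ (C : ℝ) (k₀ : ℕ), 0 < C ∧ 1 ≤ k₀ ∧
      ∀ k : ℕ, k₀ ≤ k →
        |(-Real.log (gammaCoef p b k)) - qt / (k : ℝ)| ≤ C / (k : ℝ) ^ 2 :=
  neg_log_gamma_expansion_general p b hb qt hqt
end

section
/- Let p > 1 and let b > 0 be rational with b ≠ 1. Then there exists a constant c > 0 (depending on p and b but not on N) such that for every integer N ≥ 2 and every pair of distinct matrices A ≠ Ã taken from the finite set {B_i, −B_i, C_i, −C_i : 2 ≤ i ≤ N} ∪ {A_N, −A_N}, one has |A − Ã| ≥ c. -/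
open Real

attribute [local instance] Matrix.normedAddCommGroup

noncomputable def csep (b : ℚ) : ℝ := min (b:ℝ) (1 / (b.den : ℝ))

lemma neg_diag (x y : ℝ) : -(!![x,0;0,y] : Matrix (Fin 2) (Fin 2) ℝ) = !![-x,0;0,-y] := by
  ext i j; fin_cases i <;> fin_cases j <;> simp

lemma entry_bound {c : ℝ} (x y x' y' : ℝ)
    (h : c ≤ |x - x'| ∨ c ≤ |y - y'|) :
    c ≤ ‖(!![x,0;0,y] : Matrix (Fin 2) (Fin 2) ℝ) - !![x',0;0,y']‖ := by
  rcases h with h | h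
  · refine h.trans ?_
    have := Matrix.norm_entry_le_entrywise_sup_norm
      ((!![x,0;0,y] : Matrix (Fin 2) (Fin 2) ℝ) - !![x',0;0,y']) (i := 0) (j := 0)
    simpa using this
  · refine h.trans ?_
    have := Matrix.norm_entry_le_entrywise_sup_norm
      ((!![x,0;0,y] : Matrix (Fin 2) (Fin 2) ℝ) - !![x',0;0,y']) (i := 1) (j := 1)
    simpa using this

lemma rat_sep (b : ℚ) (m n : ℕ) (h : (b:ℝ) * m ≠ n) :
    1 / (b.den : ℝ) ≤ |(b:ℝ) * m - n| := by
  have hd : (0:ℝ) < (b.den:ℝ) := by exact_mod_cast b.pos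
  have key : (b:ℝ) * m - n = ((b.num * m - n * b.den : ℤ) : ℝ) / (b.den:ℝ) := by
    rw [Rat.cast_def]; push_cast; field_simp
  have hz : (b.num * m - n * b.den : ℤ) ≠ 0 := by
    intro h0; rw [h0] at key; simp at key; exact h (by linarith)
  have h1 : (1:ℝ) ≤ |((b.num * m - n * b.den : ℤ):ℝ)| := by
    exact_mod_cast Int.one_le_abs hz
  rw [key, abs_div, abs_of_pos hd]
  gcongr

lemma le_abs_or {c a : ℝ} (h : c ≤ a ∨ c ≤ -a) : c ≤ |a| := by
  rcases h with h | h
  · exact h.trans (le_abs_self _)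
  · exact h.trans (neg_le_abs _)

lemma hbR (b : ℚ) (hb : 0 < b) : (0:ℝ) < b := by exact_mod_cast hb
lemma hcb (b : ℚ) : csep b ≤ (b:ℝ) := min_le_left _ _
lemma hc1 (b : ℚ) : csep b ≤ 1 := by
  refine (min_le_right _ _).trans ?_
  have : (1:ℝ) ≤ (b.den:ℝ) := by exact_mod_cast b.pos
  rw [div_le_one (by linarith)]; exact this
lemma hcpos (b : ℚ) (hb : 0 < b) : 0 < csep b := by
  have h1 : (0:ℝ) < b := by exact_mod_cast hb
  have h2 : (0:ℝ) < (b.den:ℝ) := by exact_mod_cast b.pos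
  exact lt_min h1 (by positivity)

-- B_i vs B_j
lemma dBB (p : ℝ) (hp : 1 < p) (b : ℚ) (hb : 0 < b) {i j : ℕ} (hi : 2 ≤ i) (hj : 2 ≤ j)
    (hne : Bmat p b i ≠ Bmat p b j) : csep b ≤ ‖Bmat p b i - Bmat p b j‖ := by
  have hij : i ≠ j := by rintro rfl; exact hne rfl
  have hB := hbR b hb
  have hc := hcb b
  simp only [Bmat]
  apply entry_bound; left
  apply le_abs_or
  rcases lt_or_gt_of_ne hij with h | h
  · right
    have : (i:ℝ) + 1 ≤ (j:ℝ) := by exact_mod_cast h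
    nlinarith
  · left
    have : (j:ℝ) + 1 ≤ (i:ℝ) := by exact_mod_cast h
    nlinarith

-- B_i vs -B_j
lemma dBnB (p : ℝ) (hp : 1 < p) (b : ℚ) (hb : 0 < b) {i j : ℕ} (hi : 2 ≤ i) (hj : 2 ≤ j) :
    csep b ≤ ‖Bmat p b i - -Bmat p b j‖ := by
  have hB := hbR b hb
  have hc := hcb b
  have h2i : (2:ℝ) ≤ (i:ℝ) := by exact_mod_cast hi
  have h2j : (2:ℝ) ≤ (j:ℝ) := by exact_mod_cast hj
  simp only [Bmat, neg_diag]
  apply entry_bound; left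
  apply le_abs_or; left; nlinarith

-- B_i vs C_j
lemma dBC (p : ℝ) (hp : 1 < p) (b : ℚ) (hb : 0 < b) {i j : ℕ} (hi : 2 ≤ i) (hj : 2 ≤ j) :
    csep b ≤ ‖Bmat p b i - Cmat p b j‖ := by
  have hB := hbR b hb
  have hc := hcb b
  have h2i : (2:ℝ) ≤ (i:ℝ) := by exact_mod_cast hi
  have h2j : (2:ℝ) ≤ (j:ℝ) := by exact_mod_cast hj
  simp only [Bmat, Cmat]
  apply entry_bound; left
  apply le_abs_or; left; nlinarith

-- B_i vs -C_j
lemma dBnC (p : ℝ) (hp : 1 < p) (b : ℚ) (hb : 0 < b) {i j : ℕ} (hi : 2 ≤ i) (hj : 2 ≤ j)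
    (hne : Bmat p b i ≠ -Cmat p b j) : csep b ≤ ‖Bmat p b i - -Cmat p b j‖ := by
  have hB := hbR b hb
  have h2i : (2:ℝ) ≤ (i:ℝ) := by exact_mod_cast hi
  simp only [Bmat, Cmat, neg_diag] at hne ⊢
  by_cases hx : (b:ℝ) * ((i:ℝ) - 1) = (j:ℝ)
  · exfalso
    apply hne
    have hy : (j:ℝ) ^ (p-1) = (b:ℝ)^(p-1) * ((i:ℝ)-1)^(p-1) := by
      rw [← hx, Real.mul_rpow (by linarith) (by linarith)]
    rw [neg_neg, hy, ← hx]
  · apply entry_bound; left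
    have hcast : ((i-1:ℕ):ℝ) = (i:ℝ) - 1 := by
      push_cast [Nat.cast_sub (by omega : 1 ≤ i)]; ring
    have := rat_sep b (i-1) j (by rw [hcast]; exact hx)
    rw [hcast] at this
    calc csep b ≤ 1/(b.den:ℝ) := min_le_right _ _
      _ ≤ |(b:ℝ)*((i:ℝ)-1) - (j:ℝ)| := this
      _ = |(b:ℝ)*((i:ℝ)-1) - -(-(j:ℝ))| := by rw [neg_neg]

-- B_i vs A_N
lemma dBA (p : ℝ) (hp : 1 < p) (b : ℚ) (hb : 0 < b) {i N : ℕ} (hi : 2 ≤ i) (hiN : i ≤ N) :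
    csep b ≤ ‖Bmat p b i - Amat p b N‖ := by
  have hB := hbR b hb
  have hc := hcb b
  have h2i : (2:ℝ) ≤ (i:ℝ) := by exact_mod_cast hi
  have hiN' : (i:ℝ) ≤ (N:ℝ) := by exact_mod_cast hiN
  simp only [Bmat, Amat]
  apply entry_bound; left
  apply le_abs_or; right; nlinarith

-- B_i vs -A_N
lemma dBnA (p : ℝ) (hp : 1 < p) (b : ℚ) (hb : 0 < b) {i N : ℕ} (hi : 2 ≤ i) (hN : 2 ≤ N) :
    csep b ≤ ‖Bmat p b i - -Amat p b N‖ := by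
  have hB := hbR b hb
  have hc := hcb b
  have h2i : (2:ℝ) ≤ (i:ℝ) := by exact_mod_cast hi
  have h2N : (2:ℝ) ≤ (N:ℝ) := by exact_mod_cast hN
  simp only [Bmat, Amat, neg_diag]
  apply entry_bound; left
  apply le_abs_or; left; nlinarith

-- C_i vs C_j
lemma dCC (p : ℝ) (hp : 1 < p) (b : ℚ) (hb : 0 < b) {i j : ℕ} (hne : Cmat p b i ≠ Cmat p b j) :
    csep b ≤ ‖Cmat p b i - Cmat p b j‖ := by
  have hij : i ≠ j := by rintro rfl; exact hne rfl
  have hc := hc1 b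
  simp only [Cmat]
  apply entry_bound; left
  apply le_abs_or
  rcases lt_or_gt_of_ne hij with h | h
  · left
    have : (i:ℝ) + 1 ≤ (j:ℝ) := by exact_mod_cast h
    nlinarith
  · right
    have : (j:ℝ) + 1 ≤ (i:ℝ) := by exact_mod_cast h
    nlinarith

-- C_i vs -C_j
lemma dCnC (p : ℝ) (hp : 1 < p) (b : ℚ) (hb : 0 < b) {i j : ℕ} (hi : 2 ≤ i) (hj : 2 ≤ j) :
    csep b ≤ ‖Cmat p b i - -Cmat p b j‖ := by
  have hc := hc1 b
  have h2i : (2:ℝ) ≤ (i:ℝ) := by exact_mod_cast hi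
  have h2j : (2:ℝ) ≤ (j:ℝ) := by exact_mod_cast hj
  simp only [Cmat, neg_diag]
  apply entry_bound; left
  apply le_abs_or; right; nlinarith

-- C_i vs A_N
lemma dCA (p : ℝ) (hp : 1 < p) (b : ℚ) (hb : 0 < b) {i N : ℕ} (hi : 2 ≤ i) (hN : 2 ≤ N) :
    csep b ≤ ‖Cmat p b i - Amat p b N‖ := by
  have hB := hbR b hb
  have hc := hcb b
  have h2i : (2:ℝ) ≤ (i:ℝ) := by exact_mod_cast hi
  have h2N : (2:ℝ) ≤ (N:ℝ) := by exact_mod_cast hN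
  simp only [Cmat, Amat]
  apply entry_bound; left
  apply le_abs_or; right; nlinarith

-- C_i vs -A_N
lemma dCnA (p : ℝ) (hp : 1 < p) (b : ℚ) (hb : 0 < b) {i N : ℕ} (hi : 2 ≤ i) (hN : 2 ≤ N) :
    csep b ≤ ‖Cmat p b i - -Amat p b N‖ := by
  have hB := hbR b hb
  have h2i : (2:ℝ) ≤ (i:ℝ) := by exact_mod_cast hi
  have h2N : (2:ℝ) ≤ (N:ℝ) := by exact_mod_cast hN
  simp only [Cmat, Amat, neg_diag]
  by_cases hx : (b:ℝ) * (N:ℝ) = (i:ℝ)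
  · apply entry_bound; right
    have h1 : (1:ℝ) ≤ (N:ℝ)^(p-1) := Real.one_le_rpow (by linarith) (by linarith)
    have h2 : (0:ℝ) ≤ (i:ℝ)^(p-1) := Real.rpow_nonneg (by linarith) _
    refine (hc1 b).trans ?_
    apply le_abs_or; left; linarith
  · apply entry_bound; left
    have := rat_sep b N i hx
    refine (min_le_right _ _).trans (this.trans (le_of_eq ?_))
    congr 1; ring

-- A_N vs -A_N
lemma dAnA (p : ℝ) (hp : 1 < p) (b : ℚ) (hb : 0 < b) {N : ℕ} (hN : 2 ≤ N) :
    csep b ≤ ‖Amat p b N - -Amat p b N‖ := by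
  have hB := hbR b hb
  have hc := hcb b
  have h2N : (2:ℝ) ≤ (N:ℝ) := by exact_mod_cast hN
  simp only [Amat, neg_diag]
  apply entry_bound; left
  apply le_abs_or; left; nlinarith


section transforms
variable (X Y : Matrix (Fin 2) (Fin 2) ℝ)
lemma nrev : ‖X - Y‖ = ‖Y - X‖ := norm_sub_rev _ _
lemma nnn : ‖-X - -Y‖ = ‖Y - X‖ := by rw [neg_sub_neg]
lemma nnl : ‖-X - Y‖ = ‖X - -Y‖ := by
  rw [show -X - Y = -(X - -Y) by abel, norm_neg]
lemma ncomm : ‖X - -Y‖ = ‖Y - -X‖ := by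
  rw [sub_neg_eq_add, sub_neg_eq_add, add_comm]
end transforms


/-- **Lemma (uniform minimal distance).** For `p > 1` and rational `b > 0`, `b ≠ 1`, there
is `c > 0` (independent of `N`) such that for every `N ≥ 2` any two distinct matrices
from `{±B_i, ±C_i : 2 ≤ i ≤ N} ∪ {±A_N}` are at distance at least `c`. -/
theorem uniform_minimal_distance (p : ℝ) (hp : 1 < p) (b : ℚ) (hb : 0 < b) (hb1 : b ≠ 1) :
    ∃ c : ℝ, 0 < c ∧
      ∀ N : ℕ, 2 ≤ N →
      ∀ A A' : Matrix (Fin 2) (Fin 2) ℝ,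
        ((∃ i : ℕ, 2 ≤ i ∧ i ≤ N ∧
            (A = Bmat p b i ∨ A = -Bmat p b i ∨ A = Cmat p b i ∨ A = -Cmat p b i)) ∨
          A = Amat p b N ∨ A = -Amat p b N) →
        ((∃ i : ℕ, 2 ≤ i ∧ i ≤ N ∧
            (A' = Bmat p b i ∨ A' = -Bmat p b i ∨ A' = Cmat p b i ∨ A' = -Cmat p b i)) ∨
          A' = Amat p b N ∨ A' = -Amat p b N) →
        A ≠ A' → c ≤ ‖A - A'‖ := by
  refine ⟨csep b, hcpos b hb, ?_⟩
  intro N hN A A' hA hA' hne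
  rcases hA with ⟨i, hi2, hiN, (rfl | rfl | rfl | rfl)⟩ | rfl | rfl <;>
    rcases hA' with ⟨j, hj2, hjN, (rfl | rfl | rfl | rfl)⟩ | rfl | rfl
  · exact dBB p hp b hb hi2 hj2 hne
  · exact dBnB p hp b hb hi2 hj2
  · exact dBC p hp b hb hi2 hj2
  · exact dBnC p hp b hb hi2 hj2 hne
  · exact dBA p hp b hb hi2 hiN
  · exact dBnA p hp b hb hi2 hN
  · rw [nnl]; exact dBnB p hp b hb hi2 hj2
  · rw [nnn]; exact dBB p hp b hb hj2 hi2 (fun h => hne (by rw [h]))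
  · rw [nnl]; exact dBnC p hp b hb hi2 hj2 (fun h => hne (by rw [h, neg_neg]))
  · rw [nnn, nrev]; exact dBC p hp b hb hi2 hj2
  · rw [nnl]; exact dBnA p hp b hb hi2 hN
  · rw [nnn, nrev]; exact dBA p hp b hb hi2 hiN
  · rw [nrev]; exact dBC p hp b hb hj2 hi2
  · rw [ncomm]; exact dBnC p hp b hb hj2 hi2 (fun h => hne (by rw [h, neg_neg]))
  · exact dCC p hp b hb hne
  · exact dCnC p hp b hb hi2 hj2
  · exact dCA p hp b hb hi2 hN
  · exact dCnA p hp b hb hi2 hN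
  · rw [nnl, ncomm]; exact dBnC p hp b hb hj2 hi2 (fun h => hne h.symm)
  · rw [nnn]; exact dBC p hp b hb hj2 hi2
  · rw [nnl]; exact dCnC p hp b hb hi2 hj2
  · rw [nnn]; exact dCC p hp b hb (fun h => hne (by rw [h]))
  · rw [nnl]; exact dCnA p hp b hb hi2 hN
  · rw [nnn, nrev]; exact dCA p hp b hb hi2 hN
  · rw [nrev]; exact dBA p hp b hb hj2 hjN
  · rw [ncomm]; exact dBnA p hp b hb hj2 hN
  · rw [nrev]; exact dCA p hp b hb hj2 hN
  · rw [ncomm]; exact dCnA p hp b hb hj2 hN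
  · exact absurd rfl hne
  · exact dAnA p hp b hb hN
  · rw [nnl, ncomm]; exact dBnA p hp b hb hj2 hN
  · rw [nnn]; exact dBA p hp b hb hj2 hjN
  · rw [nnl, ncomm]; exact dCnA p hp b hb hj2 hN
  · rw [nnn]; exact dCA p hp b hb hj2 hN
  · rw [nnl]; exact dAnA p hp b hb hN
  · exact absurd rfl hne
end

section
/- Let p > 2, r ≥ p−1, b > 0, q̄ > 0 and C₁ > 0. Let δ₀ be as in the perturbed-kernel estimate for p > 2, let N ≥ 2 be an integer, δ ∈ (0, δ₀), and ε ∈ (0,1). Suppose w = (u,v) : B² → ℝ² is Lipschitz and that, up to a Lebesgue-null set, B² is the disjoint union of measurable sets Ω_E indexed by E in the family S := {B_i, −B_i, C_i, −C_i : 2 ≤ i ≤ N} ∪ {A_N, −A_N}, such that for a.e. x ∈ Ω_E the Jacobian matrix Dw(x) satisfies |Dw(x) − E| < δ, and such that |Ω_{A_N}| + |Ω_{−A_N}| ≤ C₁ N^{−q̄}. Then there is a constant C (depending only on p, r, b, C₁, and not on N, δ, ε) such that ∫_{B²} | |∇u(x)|^{p−2}∇u(x) − ∇⊥v(x) |^{r/(p−1)}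 dx ≤ C [ ∑_{E ∈ S, E ≠ ±A_N} ( δ^r ε^{−r(p−2)/(p−1)} |Ω_E| + ε^{r/(p−1)} ∫_{Ω_E} |∇u(x)|^r dx ) + N^{r−q̄} ]. -/
open MeasureTheory Real

attribute [local instance] Matrix.normedAddCommGroup

/-- The rotated gradient `∇⊥v = (-∂₂ v, ∂₁ v)` applied to a gradient vector `g`. -/
noncomputable def perp (g : EuclideanSpace ℝ (Fin 2)) : EuclideanSpace ℝ (Fin 2) :=
  vec2 (-(g 1)) (g 0)

/-- The a.e.-defined Jacobian matrix of `w = (u,v) : B² → ℝ²`. -/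
noncomputable def Dw (u v : EuclideanSpace ℝ (Fin 2) → ℝ) (x : EuclideanSpace ℝ (Fin 2)) :
    Matrix (Fin 2) (Fin 2) ℝ :=
  !![gradient u x 0, gradient u x 1; gradient v x 0, gradient v x 1]

/-!
On a piece `Ω_E` with `E = ±B_i, ±C_i` the perturbed-kernel estimate bounds the integrand by
`(C₀ δ |∇u|^{p-2})^{r/(p-1)}`, and weighted AM–GM with weights `1/(p-1)` and `(p-2)/(p-1)` splits
`(δ |∇u|^{p-2})^{r/(p-1)}` into `δ^r ε^{-r(p-2)/(p-1)} + ε^{r/(p-1)} |∇u|^r`. Near `±A_N` no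
cancellation is available, but the rows of `Dw` have size `O(N)` and `O(N^{p-1})`, so the
integrand is `O(N^r)` there, while those two pieces have total measure at most `C₁ N^{-q̄}`.
Summing over the a.e. partition of the ball gives the bound with
`C = C₀^{r/(p-1)} + c^{r/(p-1)} C₁`, where `c = (b + 2δ₀)^{p-1} + 1 + 2δ₀`.
-/

open scoped ENNReal

lemma rpow_mul_rpow_one_sub_le_add {θ x y : ℝ} (hθ₀ : 0 ≤ θ) (hθ₁ : θ ≤ 1) (hx : 0 ≤ x)
    (hy : 0 ≤ y) : x ^ θ * y ^ (1 - θ) ≤ x + y := by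
  have := geom_mean_le_arith_mean2_weighted hθ₀ (sub_nonneg.2 hθ₁) hx hy (by ring)
  nlinarith [mul_le_of_le_one_left hx hθ₁, mul_le_of_le_one_left hy (sub_le_self 1 hθ₀)]

theorem young_epsilon {p r δ ε X : ℝ} (hp : 2 < p) (hr : 0 < r) (hδ : 0 ≤ δ) (hε : 0 < ε)
    (hX : 0 ≤ X) :
    (δ * X ^ (p - 2)) ^ (r / (p - 1)) ≤
      δ ^ r * ε ^ (-(r * (p - 2) / (p - 1))) + ε ^ (r / (p - 1)) * X ^ r := by
  have hp1 : 0 < p - 1 := by linarith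
  set κ := r / (p - 1)
  set θ := 1 / (p - 1)
  have hε' := hε.le
  have e₁ : r * θ = κ := by simp only [κ, θ]; field_simp
  have e₂ : r * (1 - θ) = (p - 2) * κ := by simp only [κ, θ]; field_simp; ring
  have cancel : ε ^ (-(r * (p - 2) / (p - 1)) * θ) * ε ^ (κ * (1 - θ)) = 1 := by
    rw [← rpow_add hε]
    convert rpow_zero ε using 2
    simp only [κ, θ]; field_simp; ring
  have split : (δ * X ^ (p - 2)) ^ κ =
      (δ ^ r * ε ^ (-(r * (p - 2) / (p - 1)))) ^ θ * (ε ^ κ * X ^ r) ^ (1 - θ) := by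
    rw [mul_rpow hδ (by positivity), mul_rpow (by positivity) (by positivity),
      mul_rpow (by positivity) (by positivity), ← rpow_mul hX, ← rpow_mul hδ, ← rpow_mul hε',
      ← rpow_mul hε', ← rpow_mul hX, e₁, e₂]
    linear_combination (-(δ ^ κ * X ^ ((p - 2) * κ))) * cancel
  rw [split]
  exact rpow_mul_rpow_one_sub_le_add (div_nonneg zero_le_one hp1.le)
    (div_le_one_of_le₀ (by linarith) hp1.le) (by positivity) (by positivity)

lemma norm_rpow_sub_two_smul_self {p : ℝ} (hp : p ≠ 1) {F : Type*} [NormedAddCommGroup F]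
    [NormedSpace ℝ F] (g : F) : ‖‖g‖ ^ (p - 2) • g‖ = ‖g‖ ^ (p - 1) := by
  rw [norm_smul, norm_of_nonneg (by positivity), ← rpow_add_one' (norm_nonneg g)
    (by contrapose! hp; linarith)]
  ring_nf

lemma add_le_mul_add_of_le_mul {a s c₀ c₁ σ t : ℝ} (ha : a ≤ c₁ * t) (hs : s ≤ c₀ * σ)
    (hc₀ : 0 ≤ c₀) (hc₁ : 0 ≤ c₁) (hσ : 0 ≤ σ) (ht : 0 ≤ t) : a + s ≤ (c₀ + c₁) * (σ + t) := by
  nlinarith [mul_nonneg hc₀ ht, mul_nonneg hc₁ hσ]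

theorem integral_eq_sum_of_ae_partition {α ι F : Type*} [MeasurableSpace α] {μ : Measure α}
    [NormedAddCommGroup F] [NormedSpace ℝ F] {S : Finset ι} {s : Set α} {Ω : ι → Set α}
    {f : α → F} (hmeas : ∀ i ∈ S, MeasurableSet (Ω i))
    (hdisj : ∀ i ∈ S, ∀ j ∈ S, i ≠ j → Ω i ∩ Ω j = ∅) (hsub : ∀ i ∈ S, Ω i ⊆ s)
    (hcov : μ (s \ ⋃ i ∈ S, Ω i) = 0) (hf : ∀ i ∈ S, IntegrableOn f (Ω i) μ) :
    ∫ x in s, f x ∂μ = ∑ i ∈ S, ∫ x in Ω i, f x ∂μ := by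
  have hs : s =ᵐ[μ] ⋃ i ∈ S, Ω i := by
    rw [ae_eq_set, Set.sdiff_eq_empty.2 (Set.iUnion₂_subset hsub)]
    exact ⟨hcov, measure_empty⟩
  rw [setIntegral_congr_set hs]
  exact integral_biUnion_finset S hmeas
    (fun i hi j hj hij => Set.disjoint_iff_inter_eq_empty.2 (hdisj i hi j hj hij)) hf

lemma abs_apply_le_of_norm_sub_lt {m n : Type*} [Fintype m] [Fintype n]
    {M E : Matrix m n ℝ} {δ : ℝ} (h : ‖M - E‖ < δ) (i : m) (j : n) :
    |M i j| ≤ |E i j| + δ := by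
  have := (M - E).norm_entry_le_entrywise_sup_norm (i := i) (j := j)
  rw [Matrix.sub_apply, norm_eq_abs] at this
  linarith [abs_sub_abs_le_abs_sub (M i j) (E i j)]

lemma LipschitzWith.norm_gradient_le {F : Type*} [NormedAddCommGroup F] [InnerProductSpace ℝ F]
    [CompleteSpace F] {u : F → ℝ} {K : NNReal} (hu : LipschitzWith K u) (x : F) :
    ‖gradient u x‖ ≤ K :=
  ((InnerProductSpace.toDual ℝ F).symm.norm_map _).trans_le (norm_fderiv_le_of_lipschitz ℝ hu)

lemma measurable_gradient {F : Type*} [NormedAddCommGroup F] [InnerProductSpace ℝ F]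
    [CompleteSpace F] [MeasurableSpace F] [BorelSpace F] (u : F → ℝ) :
    Measurable (gradient u) :=
  (InnerProductSpace.toDual ℝ F).symm.continuous.measurable.comp (measurable_fderiv ℝ u)

local notation "ℝ²" => EuclideanSpace ℝ (Fin 2)

lemma vec2_eta (g : ℝ²) : vec2 (g 0) (g 1) = g := by
  ext i; fin_cases i <;> rfl

lemma norm_vec2_le (a c : ℝ) : ‖vec2 a c‖ ≤ |a| + |c| := by
  rw [EuclideanSpace.norm_eq, sqrt_le_left (by positivity)]
  simp [vec2, Fin.sum_univ_two]
  nlinarith [abs_nonneg a, abs_nonneg c, sq_abs a, sq_abs c]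

lemma norm_perp (g : ℝ²) : ‖perp g‖ = ‖g‖ := by
  simp [EuclideanSpace.norm_eq, perp, vec2, Fin.sum_univ_two, add_comm]

lemma continuous_perp : Continuous perp :=
  (PiLp.continuous_toLp 2 _).comp (continuous_pi fun i => by fin_cases i <;> dsimp <;> fun_prop)

noncomputable def kernelDefect (p : ℝ) (M : Matrix (Fin 2) (Fin 2) ℝ) : ℝ² :=
  ‖vec2 (M 0 0) (M 0 1)‖ ^ (p - 2) • vec2 (M 0 0) (M 0 1) - vec2 (-(M 1 1)) (M 1 0)

lemma kernelDefect_Dw (p : ℝ) (u v : ℝ² → ℝ) (x : ℝ²) :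
    kernelDefect p (Dw u v x) = ‖gradient u x‖ ^ (p - 2) • gradient u x - perp (gradient v x) := by
  rw [kernelDefect, ← vec2_eta (gradient u x)]; rfl

lemma norm_kernelDefect_le {p : ℝ} (hp : p ≠ 1) (M : Matrix (Fin 2) (Fin 2) ℝ) :
    ‖kernelDefect p M‖ ≤ ‖vec2 (M 0 0) (M 0 1)‖ ^ (p - 1) + ‖vec2 (-(M 1 1)) (M 1 0)‖ :=
  (norm_sub_le _ _).trans_eq (by rw [norm_rpow_sub_two_smul_self hp])

theorem norm_kernelDefect_le_of_near_Amat {p b δ₀ δ : ℝ} (hp : 1 < p) (hb : 0 ≤ b)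
    (hδ : δ ≤ δ₀) {N : ℕ} (hN : 1 ≤ N) {M E : Matrix (Fin 2) (Fin 2) ℝ}
    (hE : E = Amat p b N ∨ E = -Amat p b N) (hM : ‖M - E‖ < δ) :
    ‖kernelDefect p M‖ ≤ ((b + 2 * δ₀) ^ (p - 1) + 1 + 2 * δ₀) * N ^ (p - 1) := by
  have hN1 : (1 : ℝ) ≤ N := by exact_mod_cast hN
  have hNp : (1 : ℝ) ≤ (N : ℝ) ^ (p - 1) := one_le_rpow hN1 (by linarith)
  have hδ0 : 0 ≤ δ := (norm_nonneg _).trans hM.le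
  have hEA : ∀ i j, |E i j| = |Amat p b N i j| := by rcases hE with rfl | rfl <;> simp
  have hent : ∀ i j, |M i j| ≤ |Amat p b N i j| + δ₀ := fun i j => by
    linarith [abs_apply_le_of_norm_sub_lt hM i j, hEA i j]
  have h00 := hent 0 0
  have h01 := hent 0 1
  have h10 := hent 1 0
  have h11 := hent 1 1
  simp only [Amat, Matrix.of_apply, Matrix.cons_val', Matrix.cons_val_zero, Matrix.cons_val_one,
    Matrix.empty_val', Matrix.cons_val_fin_one, abs_zero, zero_add,
    abs_of_nonneg (by positivity : 0 ≤ b * N),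
    abs_of_nonneg (by positivity : 0 ≤ (N : ℝ) ^ (p - 1))]
    at h00 h01 h10 h11
  have row₀ : ‖vec2 (M 0 0) (M 0 1)‖ ≤ (b + 2 * δ₀) * N := by
    nlinarith [norm_vec2_le (M 0 0) (M 0 1)]
  have row₁ : ‖vec2 (-(M 1 1)) (M 1 0)‖ ≤ (1 + 2 * δ₀) * N ^ (p - 1) := by
    nlinarith [norm_vec2_le (-(M 1 1)) (M 1 0), abs_neg (M 1 1)]
  calc ‖kernelDefect p M‖
      ≤ ‖vec2 (M 0 0) (M 0 1)‖ ^ (p - 1) + ‖vec2 (-(M 1 1)) (M 1 0)‖ :=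
        norm_kernelDefect_le hp.ne' M
    _ ≤ ((b + 2 * δ₀) * N) ^ (p - 1) + (1 + 2 * δ₀) * N ^ (p - 1) := by
        gcongr
    _ = ((b + 2 * δ₀) ^ (p - 1) + 1 + 2 * δ₀) * N ^ (p - 1) := by
        rw [mul_rpow (by linarith) (by positivity)]; ring

section Wells

open Classical in
noncomputable def wellsBC (p b : ℝ) (N : ℕ) : Finset (Matrix (Fin 2) (Fin 2) ℝ) :=
  (Finset.Icc 2 N).biUnion fun i => {Bmat p b i, -Bmat p b i, Cmat p b i, -Cmat p b i}

open Classical in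
noncomputable def wells (p b : ℝ) (N : ℕ) : Finset (Matrix (Fin 2) (Fin 2) ℝ) :=
  insert (Amat p b N) (insert (-Amat p b N) (wellsBC p b N))

variable {p b : ℝ} {N : ℕ}

lemma mem_wellsBC {E : Matrix (Fin 2) (Fin 2) ℝ} : E ∈ wellsBC p b N ↔ ∃ i : ℕ, 2 ≤ i ∧ i ≤ N ∧
    (E = Bmat p b i ∨ E = -Bmat p b i ∨ E = Cmat p b i ∨ E = -Cmat p b i) := by
  simp [wellsBC, and_assoc]

lemma coe_wells (p b : ℝ) (N : ℕ) : (wells p b N : Set (Matrix (Fin 2) (Fin 2) ℝ)) =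
    {E | (∃ i : ℕ, 2 ≤ i ∧ i ≤ N ∧
      (E = Bmat p b i ∨ E = -Bmat p b i ∨ E = Cmat p b i ∨ E = -Cmat p b i)) ∨
      E = Amat p b N ∨ E = -Amat p b N} := by
  ext E
  simp only [wells, Finset.coe_insert, Set.mem_insert_iff, Finset.mem_coe, mem_wellsBC]
  exact or_rotate.trans or_rotate

lemma diag_mul_neg_of_mem_wellsBC (hb : 0 < b) {E : Matrix (Fin 2) (Fin 2) ℝ}
    (hE : E ∈ wellsBC p b N) : E 0 0 * E 1 1 < 0 := by
  obtain ⟨i, hi, -, hE⟩ := mem_wellsBC.1 hE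
  have hi1 : (1 : ℝ) ≤ i - 1 := by
    have : (2 : ℝ) ≤ i := by exact_mod_cast hi
    linarith
  have hB : 0 < b * ((i : ℝ) - 1) * (b ^ (p - 1) * ((i : ℝ) - 1) ^ (p - 1)) := by positivity
  have hC : 0 < (i : ℝ) * (i : ℝ) ^ (p - 1) := by positivity
  rcases hE with rfl | rfl | rfl | rfl <;> simp [Bmat, Cmat] <;> linarith

lemma Amat_diag_mul_pos (hb : 0 < b) (hN : 1 ≤ N) : 0 < Amat p b N 0 0 * Amat p b N 1 1 := by
  have : (0 : ℝ) < N := by exact_mod_cast hN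
  simp only [Amat, Matrix.of_apply, Matrix.cons_val', Matrix.cons_val_zero, Matrix.cons_val_one,
    Matrix.empty_val', Matrix.cons_val_fin_one]
  positivity

lemma Amat_not_mem_wellsBC (hb : 0 < b) (hN : 1 ≤ N) : Amat p b N ∉ wellsBC p b N :=
  fun h => (diag_mul_neg_of_mem_wellsBC hb h).not_gt (Amat_diag_mul_pos hb hN)

lemma neg_Amat_not_mem_wellsBC (hb : 0 < b) (hN : 1 ≤ N) : -Amat p b N ∉ wellsBC p b N :=
  fun h => (diag_mul_neg_of_mem_wellsBC hb h).not_gt <| by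
    simpa only [Matrix.neg_apply, neg_mul_neg] using Amat_diag_mul_pos hb hN

lemma Amat_ne_neg (hb : 0 < b) (hN : 1 ≤ N) : Amat p b N ≠ -Amat p b N := fun h => by
  have h00 := congrFun (congrFun h 0) 0
  have := Amat_diag_mul_pos (p := p) hb hN
  simp only [Matrix.neg_apply] at h00
  rw [show Amat p b N 0 0 = 0 by linarith, zero_mul] at this
  exact this.false

lemma wellsBC_subset_wells : wellsBC p b N ⊆ wells p b N :=
  fun _ hE => Finset.mem_insert_of_mem (Finset.mem_insert_of_mem hE)

lemma sum_wells {G : Type*} [AddCommMonoid G] (hb : 0 < b) (hN : 1 ≤ N)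
    (f : Matrix (Fin 2) (Fin 2) ℝ → G) :
    ∑ E ∈ wells p b N, f E = f (Amat p b N) + f (-Amat p b N) + ∑ E ∈ wellsBC p b N, f E := by
  rw [wells, Finset.sum_insert (by simp [Amat_ne_neg hb hN, Amat_not_mem_wellsBC hb hN]),
    Finset.sum_insert (neg_Amat_not_mem_wellsBC hb hN), add_assoc]

end Wells

lemma measurable_kernelDefect_Dw (p : ℝ) (u v : ℝ² → ℝ) :
    Measurable fun x => kernelDefect p (Dw u v x) := by
  simp only [kernelDefect_Dw]
  exact ((measurable_gradient u).norm.pow_const _).smul (measurable_gradient u) |>.sub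
    (continuous_perp.measurable.comp (measurable_gradient v))

section LipschitzMaps

variable {u v : ℝ² → ℝ} {Ku Kv : NNReal}

lemma norm_kernelDefect_Dw_le {p : ℝ} (hp : 1 < p) (hu : LipschitzWith Ku u)
    (hv : LipschitzWith Kv v) (x : ℝ²) :
    ‖kernelDefect p (Dw u v x)‖ ≤ (Ku : ℝ) ^ (p - 1) + Kv := by
  rw [kernelDefect_Dw]
  refine (norm_sub_le _ _).trans ?_
  rw [norm_rpow_sub_two_smul_self hp.ne', norm_perp]
  gcongr
  exacts [hu.norm_gradient_le x, hv.norm_gradient_le x]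

lemma integrableOn_norm_kernelDefect_Dw_rpow {p κ : ℝ} (hp : 1 < p) (hκ : 0 ≤ κ)
    (hu : LipschitzWith Ku u) (hv : LipschitzWith Kv v) {s : Set ℝ²} (hs : volume s ≠ ∞) :
    IntegrableOn (fun x => ‖kernelDefect p (Dw u v x)‖ ^ κ) s :=
  Measure.integrableOn_of_bounded hs
    ((measurable_kernelDefect_Dw p u v).norm.pow_const κ).aestronglyMeasurable
    (M := ((Ku : ℝ) ^ (p - 1) + Kv) ^ κ) <| ae_of_all _ fun x => by
      rw [norm_of_nonneg (by positivity)]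
      exact rpow_le_rpow (norm_nonneg _) (norm_kernelDefect_Dw_le hp hu hv x) hκ

lemma integrableOn_norm_gradient_rpow {r : ℝ} (hr : 0 ≤ r) (hu : LipschitzWith Ku u)
    {s : Set ℝ²} (hs : volume s ≠ ∞) : IntegrableOn (fun x => ‖gradient u x‖ ^ r) s :=
  Measure.integrableOn_of_bounded hs
    ((measurable_gradient u).norm.pow_const r).aestronglyMeasurable
    (M := (Ku : ℝ) ^ r) <| ae_of_all _ fun x => by
      rw [norm_of_nonneg (by positivity)]
      exact rpow_le_rpow (norm_nonneg _) (hu.norm_gradient_le x) hr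

theorem setIntegral_norm_kernelDefect_rpow_le_of_kernel_estimate {p r C₀ δ ε : ℝ}
    (hp : 2 < p) (hr : 0 < r) (hC₀ : 0 ≤ C₀) (hδ : 0 ≤ δ) (hε : 0 < ε)
    (hu : LipschitzWith Ku u) {E : Matrix (Fin 2) (Fin 2) ℝ}
    (hker : ∀ M : Matrix (Fin 2) (Fin 2) ℝ, ‖M - E‖ < δ →
      ‖kernelDefect p M‖ ≤ C₀ * δ * ‖vec2 (M 0 0) (M 0 1)‖ ^ (p - 2))
    {Ω : Set ℝ²} (hΩ : MeasurableSet Ω) (hΩfin : volume Ω ≠ ∞)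
    (hΩE : ∀ᵐ x, x ∈ Ω → ‖Dw u v x - E‖ < δ) :
    ∫ x in Ω, ‖kernelDefect p (Dw u v x)‖ ^ (r / (p - 1)) ≤
      C₀ ^ (r / (p - 1)) * (δ ^ r * ε ^ (-(r * (p - 2) / (p - 1))) * (volume Ω).toReal +
        ε ^ (r / (p - 1)) * ∫ x in Ω, ‖gradient u x‖ ^ r) := by
  have hκ : 0 ≤ r / (p - 1) := div_nonneg hr.le (by linarith)
  have hX := integrableOn_norm_gradient_rpow hr.le hu hΩfin
  have hpt : ∀ᵐ x ∂volume.restrict Ω, ‖kernelDefect p (Dw u v x)‖ ^ (r / (p - 1)) ≤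
      C₀ ^ (r / (p - 1)) * (δ ^ r * ε ^ (-(r * (p - 2) / (p - 1))) +
        ε ^ (r / (p - 1)) * ‖gradient u x‖ ^ r) := by
    refine (ae_restrict_iff' hΩ).2 ?_
    filter_upwards [hΩE] with x hx hxΩ
    have hkx : ‖kernelDefect p (Dw u v x)‖ ≤ C₀ * δ * ‖gradient u x‖ ^ (p - 2) := by
      rw [← vec2_eta (gradient u x)]; exact hker _ (hx hxΩ)
    calc ‖kernelDefect p (Dw u v x)‖ ^ (r / (p - 1))
        ≤ (C₀ * (δ * ‖gradient u x‖ ^ (p - 2))) ^ (r / (p - 1)) := by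
          rw [← mul_assoc]; exact rpow_le_rpow (norm_nonneg _) hkx hκ
      _ = C₀ ^ (r / (p - 1)) * (δ * ‖gradient u x‖ ^ (p - 2)) ^ (r / (p - 1)) :=
          mul_rpow hC₀ (by positivity)
      _ ≤ _ := by gcongr; exact young_epsilon hp hr hδ hε (norm_nonneg _)
  calc ∫ x in Ω, ‖kernelDefect p (Dw u v x)‖ ^ (r / (p - 1))
      ≤ ∫ x in Ω, C₀ ^ (r / (p - 1)) * (δ ^ r * ε ^ (-(r * (p - 2) / (p - 1))) +
          ε ^ (r / (p - 1)) * ‖gradient u x‖ ^ r) :=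
        integral_mono_of_nonneg (ae_of_all _ fun x => by positivity)
          (((integrableOn_const hΩfin).add (hX.const_mul _)).const_mul _) hpt
    _ = _ := by
        rw [integral_const_mul, integral_add (integrableOn_const hΩfin).integrable (hX.const_mul _),
          setIntegral_const, integral_const_mul, smul_eq_mul, measureReal_def]
        ring

theorem setIntegral_norm_kernelDefect_rpow_le_of_near_Amat {p r b δ₀ δ : ℝ} (hp : 1 < p)
    (hr : 0 ≤ r) (hb : 0 ≤ b) (hδ₀ : 0 ≤ δ₀) (hδ : δ ≤ δ₀) {N : ℕ} (hN : 1 ≤ N)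
    {E : Matrix (Fin 2) (Fin 2) ℝ} (hE : E = Amat p b N ∨ E = -Amat p b N)
    {Ω : Set ℝ²} (hΩ : MeasurableSet Ω) (hΩfin : volume Ω ≠ ∞)
    (hΩE : ∀ᵐ x, x ∈ Ω → ‖Dw u v x - E‖ < δ) :
    ∫ x in Ω, ‖kernelDefect p (Dw u v x)‖ ^ (r / (p - 1)) ≤
      ((b + 2 * δ₀) ^ (p - 1) + 1 + 2 * δ₀) ^ (r / (p - 1)) * N ^ r * (volume Ω).toReal := by
  have hκ : 0 ≤ r / (p - 1) := div_nonneg hr (by linarith)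
  have hpt : ∀ᵐ x ∂volume.restrict Ω, ‖kernelDefect p (Dw u v x)‖ ^ (r / (p - 1)) ≤
      ((b + 2 * δ₀) ^ (p - 1) + 1 + 2 * δ₀) ^ (r / (p - 1)) * N ^ r := by
    refine (ae_restrict_iff' hΩ).2 ?_
    filter_upwards [hΩE] with x hx hxΩ
    calc ‖kernelDefect p (Dw u v x)‖ ^ (r / (p - 1))
        ≤ (((b + 2 * δ₀) ^ (p - 1) + 1 + 2 * δ₀) * N ^ (p - 1)) ^ (r / (p - 1)) :=
          rpow_le_rpow (norm_nonneg _)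
            (norm_kernelDefect_le_of_near_Amat hp hb hδ hN hE (hx hxΩ)) hκ
      _ = _ := by
          rw [mul_rpow (by positivity) (by positivity), ← rpow_mul (Nat.cast_nonneg N)]
          congr 2; field_simp [show p - 1 ≠ 0 by linarith]
  calc ∫ x in Ω, ‖kernelDefect p (Dw u v x)‖ ^ (r / (p - 1))
      ≤ ∫ _ in Ω, ((b + 2 * δ₀) ^ (p - 1) + 1 + 2 * δ₀) ^ (r / (p - 1)) * (N : ℝ) ^ r :=
        integral_mono_of_nonneg (ae_of_all _ fun x => by positivity)
          (integrableOn_const hΩfin) hpt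
    _ = _ := by rw [setIntegral_const, smul_eq_mul, measureReal_def, mul_comm]

section Configuration

variable {p r b δ : ℝ} {N : ℕ} {Ω : Matrix (Fin 2) (Fin 2) ℝ → Set ℝ²}
  (hΩ : ∀ E ∈ wells p b N, MeasurableSet (Ω E)) (hΩfin : ∀ E ∈ wells p b N, volume (Ω E) ≠ ∞)
  (hΩE : ∀ E ∈ wells p b N, ∀ᵐ x, x ∈ Ω E → ‖Dw u v x - E‖ < δ)
include hΩ hΩfin hΩE

theorem sum_setIntegral_wellsBC_le {C₀ ε : ℝ} (hp : 2 < p) (hr : 0 < r) (hC₀ : 0 ≤ C₀)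
    (hδ : 0 ≤ δ) (hε : 0 < ε) (hu : LipschitzWith Ku u)
    (hker : ∀ i : ℕ, 2 ≤ i → ∀ M E : Matrix (Fin 2) (Fin 2) ℝ,
      (E = Bmat p b i ∨ E = -Bmat p b i ∨ E = Cmat p b i ∨ E = -Cmat p b i) → ‖M - E‖ < δ →
      ‖kernelDefect p M‖ ≤ C₀ * δ * ‖vec2 (M 0 0) (M 0 1)‖ ^ (p - 2)) :
    ∑ E ∈ wellsBC p b N, ∫ x in Ω E, ‖kernelDefect p (Dw u v x)‖ ^ (r / (p - 1)) ≤
      C₀ ^ (r / (p - 1)) * ∑ E ∈ wellsBC p b N,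
        (δ ^ r * ε ^ (-(r * (p - 2) / (p - 1))) * (volume (Ω E)).toReal +
          ε ^ (r / (p - 1)) * ∫ x in Ω E, ‖gradient u x‖ ^ r) := by
  rw [Finset.mul_sum]
  refine Finset.sum_le_sum fun E hE => ?_
  obtain ⟨i, hi, -, hEi⟩ := mem_wellsBC.1 hE
  have hEw := wellsBC_subset_wells hE
  exact setIntegral_norm_kernelDefect_rpow_le_of_kernel_estimate hp hr hC₀ hδ hε hu
    (hker i hi · E hEi) (hΩ E hEw) (hΩfin E hEw) (hΩE E hEw)

theorem setIntegral_Amat_add_setIntegral_neg_Amat_le {δ₀ C₁ q : ℝ} (hp : 1 < p) (hr : 0 ≤ r)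
    (hb : 0 ≤ b) (hδ₀ : 0 ≤ δ₀) (hδ : δ ≤ δ₀) (hN : 1 ≤ N)
    (hvol : (volume (Ω (Amat p b N))).toReal + (volume (Ω (-Amat p b N))).toReal ≤
      C₁ * (N : ℝ) ^ (-q)) :
    (∫ x in Ω (Amat p b N), ‖kernelDefect p (Dw u v x)‖ ^ (r / (p - 1))) +
        ∫ x in Ω (-Amat p b N), ‖kernelDefect p (Dw u v x)‖ ^ (r / (p - 1)) ≤
      ((b + 2 * δ₀) ^ (p - 1) + 1 + 2 * δ₀) ^ (r / (p - 1)) * C₁ * N ^ (r - q) := by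
  have hpiece : ∀ E, (E = Amat p b N ∨ E = -Amat p b N) →
      ∫ x in Ω E, ‖kernelDefect p (Dw u v x)‖ ^ (r / (p - 1)) ≤
        ((b + 2 * δ₀) ^ (p - 1) + 1 + 2 * δ₀) ^ (r / (p - 1)) * N ^ r * (volume (Ω E)).toReal := by
    intro E hE
    have hEw : E ∈ wells p b N := by rcases hE with rfl | rfl <;> simp [wells]
    exact setIntegral_norm_kernelDefect_rpow_le_of_near_Amat hp hr hb hδ₀ hδ hN hE
      (hΩ E hEw) (hΩfin E hEw) (hΩE E hEw)
  have hN₀ : (0 : ℝ) < N := by exact_mod_cast hN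
  calc _ ≤ ((b + 2 * δ₀) ^ (p - 1) + 1 + 2 * δ₀) ^ (r / (p - 1)) * N ^ r *
        ((volume (Ω (Amat p b N))).toReal + (volume (Ω (-Amat p b N))).toReal) := by
        linarith [hpiece _ (Or.inl rfl), hpiece _ (Or.inr rfl)]
    _ ≤ ((b + 2 * δ₀) ^ (p - 1) + 1 + 2 * δ₀) ^ (r / (p - 1)) * N ^ r * (C₁ * N ^ (-q)) := by
        gcongr
    _ = _ := by rw [show r - q = r + -q by ring, rpow_add hN₀]; ring

end Configuration

end LipschitzMaps

open Classical in
theorem inhomogeneity_upper_bound_general (p r b qbar C₁ δ₀ C₀ : ℝ)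
    (hp : 2 < p) (hr : p - 1 ≤ r) (hb : 0 < b) (hC₁ : 0 < C₁)
    (hδ₀ : 0 < δ₀) (hC₀ : 0 < C₀)
    (hkernel : ∀ δ : ℝ, 0 < δ → δ < δ₀ → ∀ i : ℕ, 2 ≤ i →
      ∀ M E : Matrix (Fin 2) (Fin 2) ℝ,
        (E = Bmat p b i ∨ E = -Bmat p b i ∨ E = Cmat p b i ∨ E = -Cmat p b i) →
        ‖M - E‖ < δ →
        ‖(‖vec2 (M 0 0) (M 0 1)‖ ^ (p - 2)) • vec2 (M 0 0) (M 0 1)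
            - vec2 (-(M 1 1)) (M 1 0)‖ ≤ C₀ * δ * ‖vec2 (M 0 0) (M 0 1)‖ ^ (p - 2)) :
    ∃ C : ℝ, 0 < C ∧
      ∀ (N : ℕ), 2 ≤ N → ∀ (δ ε : ℝ), 0 < δ → δ < δ₀ → 0 < ε → ε < 1 →
      ∀ (u v : EuclideanSpace ℝ (Fin 2) → ℝ) (Ku Kv : NNReal),
        LipschitzWith Ku u → LipschitzWith Kv v →
      ∀ (Ω : Matrix (Fin 2) (Fin 2) ℝ → Set (EuclideanSpace ℝ (Fin 2))),
      -- the index family `S`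
      (∀ S : Set (Matrix (Fin 2) (Fin 2) ℝ),
        S = {E | (∃ i : ℕ, 2 ≤ i ∧ i ≤ N ∧
              (E = Bmat p b i ∨ E = -Bmat p b i ∨ E = Cmat p b i ∨ E = -Cmat p b i)) ∨
            E = Amat p b N ∨ E = -Amat p b N} →
        -- the pieces are measurable subsets of the ball
        (∀ E ∈ S, MeasurableSet (Ω E)) ∧
        (∀ E ∈ S, Ω E ⊆ Metric.ball (0 : EuclideanSpace ℝ (Fin 2)) 1) ∧
        -- pairwise disjoint
        (∀ E ∈ S, ∀ E' ∈ S, E ≠ E' → Ω E ∩ Ω E' = ∅) ∧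
        -- they cover the ball up to a null set
        volume (Metric.ball (0 : EuclideanSpace ℝ (Fin 2)) 1 \ ⋃ E ∈ S, Ω E) = 0 ∧
        -- the Jacobian is `δ`-close to `E` a.e. on `Ω_E`
        (∀ E ∈ S, ∀ᵐ x ∂volume, x ∈ Ω E → ‖Dw u v x - E‖ < δ)) →
      -- the `±A_N` pieces are small
      (volume (Ω (Amat p b N))).toReal + (volume (Ω (-Amat p b N))).toReal
        ≤ C₁ * (N : ℝ) ^ (-qbar) →
      (∫ x in Metric.ball (0 : EuclideanSpace ℝ (Fin 2)) 1,
          ‖(‖gradient u x‖ ^ (p - 2)) • gradient u x - perp (gradient v x)‖ ^ (r / (p - 1)))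
        ≤ C * ((∑ E ∈ (Finset.Icc 2 N).biUnion
              (fun i => {Bmat p b i, -Bmat p b i, Cmat p b i, -Cmat p b i}),
              (δ ^ r * ε ^ (-(r * (p - 2) / (p - 1))) * (volume (Ω E)).toReal +
                ε ^ (r / (p - 1)) * ∫ x in Ω E, ‖gradient u x‖ ^ r)) +
            (N : ℝ) ^ (r - qbar)) := by
  have hp1 : 1 < p := by linarith
  have hr₀ : 0 < r := by linarith
  refine ⟨C₀ ^ (r / (p - 1)) + ((b + 2 * δ₀) ^ (p - 1) + 1 + 2 * δ₀) ^ (r / (p - 1)) * C₁,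
    by positivity, ?_⟩
  intro N hN δ ε hδ hδlt hε _ u v Ku Kv hu hv Ω hΩ hA
  obtain ⟨hmeas, hsub, hdisj, hcov, hae⟩ := hΩ _ (coe_wells p b N)
  have hN₁ : 1 ≤ N := by omega
  have hfin : ∀ E ∈ wells p b N, volume (Ω E) ≠ ∞ := fun E hE =>
    ((measure_mono (hsub E hE)).trans_lt measure_ball_lt_top).ne
  simp_rw [← kernelDefect_Dw]
  rw [integral_eq_sum_of_ae_partition hmeas hdisj hsub hcov fun E hE =>
      integrableOn_norm_kernelDefect_Dw_rpow hp1 (by positivity) hu hv (hfin E hE),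
    sum_wells hb hN₁]
  -- the sum in the statement is `wellsBC p b N` unfolded
  change _ ≤ _ * (∑ E ∈ wellsBC p b N, _ + _)
  exact add_le_mul_add_of_le_mul
    (setIntegral_Amat_add_setIntegral_neg_Amat_le hmeas hfin hae hp1 hr₀.le hb.le hδ₀.le
      hδlt.le hN₁ hA)
    (sum_setIntegral_wellsBC_le hmeas hfin hae hp hr₀ hC₀.le hδ.le hε hu (hkernel δ hδ hδlt))
    (by positivity) (by positivity) (Finset.sum_nonneg fun _ _ => by positivity) (by positivity)

open Classical in
/-- **Lemma (upper bound for the inhomogeneity, case `p > 2`).**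
Given the perturbed-kernel estimate with constants `δ₀, C₀`, there is a constant `C`
(depending only on `p, r, b, C₁` but not on `N, δ, ε, w, Ω`) such that for any Lipschitz
`w = (u,v)` whose Jacobian decomposes `B²` (up to a null set) into pieces `Ω_E`,
`E ∈ S = {±B_i, ±C_i : 2 ≤ i ≤ N} ∪ {±A_N}`, on which `|Dw − E| < δ` a.e., with
`|Ω_{A_N}| + |Ω_{−A_N}| ≤ C₁ N^{−q̄}`, one has
`∫_{B²} ||∇u|^{p−2}∇u − ∇⊥v|^{r/(p−1)}
  ≤ C [ ∑_{E ∈ S, E ≠ ±A_N} ( δ^r ε^{−r(p−2)/(p−1)} |Ω_E| + ε^{r/(p−1)} ∫_{Ω_E} |∇u|^r ) + N^{r−q̄} ]`. -/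
theorem inhomogeneity_upper_bound (p r b qbar C₁ δ₀ C₀ : ℝ)
    (hp : 2 < p) (hr : p - 1 ≤ r) (hb : 0 < b) (hq : 0 < qbar) (hC₁ : 0 < C₁)
    (hδ₀ : 0 < δ₀) (hC₀ : 0 < C₀)
    (hkernel : ∀ δ : ℝ, 0 < δ → δ < δ₀ → ∀ i : ℕ, 2 ≤ i →
      ∀ M E : Matrix (Fin 2) (Fin 2) ℝ,
        (E = Bmat p b i ∨ E = -Bmat p b i ∨ E = Cmat p b i ∨ E = -Cmat p b i) →
        ‖M - E‖ < δ →
        ‖(‖vec2 (M 0 0) (M 0 1)‖ ^ (p - 2)) • vec2 (M 0 0) (M 0 1)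
            - vec2 (-(M 1 1)) (M 1 0)‖ ≤ C₀ * δ * ‖vec2 (M 0 0) (M 0 1)‖ ^ (p - 2)) :
    ∃ C : ℝ, 0 < C ∧
      ∀ (N : ℕ), 2 ≤ N → ∀ (δ ε : ℝ), 0 < δ → δ < δ₀ → 0 < ε → ε < 1 →
      ∀ (u v : EuclideanSpace ℝ (Fin 2) → ℝ) (Ku Kv : NNReal),
        LipschitzWith Ku u → LipschitzWith Kv v →
      ∀ (Ω : Matrix (Fin 2) (Fin 2) ℝ → Set (EuclideanSpace ℝ (Fin 2))),
      -- the index family `S`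
      (∀ S : Set (Matrix (Fin 2) (Fin 2) ℝ),
        S = {E | (∃ i : ℕ, 2 ≤ i ∧ i ≤ N ∧
              (E = Bmat p b i ∨ E = -Bmat p b i ∨ E = Cmat p b i ∨ E = -Cmat p b i)) ∨
            E = Amat p b N ∨ E = -Amat p b N} →
        -- the pieces are measurable subsets of the ball
        (∀ E ∈ S, MeasurableSet (Ω E)) ∧
        (∀ E ∈ S, Ω E ⊆ Metric.ball (0 : EuclideanSpace ℝ (Fin 2)) 1) ∧
        -- pairwise disjoint
        (∀ E ∈ S, ∀ E' ∈ S, E ≠ E' → Ω E ∩ Ω E' = ∅) ∧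
        -- they cover the ball up to a null set
        volume (Metric.ball (0 : EuclideanSpace ℝ (Fin 2)) 1 \ ⋃ E ∈ S, Ω E) = 0 ∧
        -- the Jacobian is `δ`-close to `E` a.e. on `Ω_E`
        (∀ E ∈ S, ∀ᵐ x ∂volume, x ∈ Ω E → ‖Dw u v x - E‖ < δ)) →
      -- the `±A_N` pieces are small
      (volume (Ω (Amat p b N))).toReal + (volume (Ω (-Amat p b N))).toReal
        ≤ C₁ * (N : ℝ) ^ (-qbar) →
      (∫ x in Metric.ball (0 : EuclideanSpace ℝ (Fin 2)) 1,
          ‖(‖gradient u x‖ ^ (p - 2)) • gradient u x - perp (gradient v x)‖ ^ (r / (p - 1)))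
        ≤ C * ((∑ E ∈ (Finset.Icc 2 N).biUnion
              (fun i => {Bmat p b i, -Bmat p b i, Cmat p b i, -Cmat p b i}),
              (δ ^ r * ε ^ (-(r * (p - 2) / (p - 1))) * (volume (Ω E)).toReal +
                ε ^ (r / (p - 1)) * ∫ x in Ω E, ‖gradient u x‖ ^ r)) +
            (N : ℝ) ^ (r - qbar)) :=
  inhomogeneity_upper_bound_general p r b qbar C₁ δ₀ C₀ hp hr hb hC₁ hδ₀ hC₀ hkernel
end
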